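/- In a three-circle configuration, let A' be a point lying on line BC and on line YZ, B' a point lying on line CA and on line ZX, and C' a point lying on line AB and on line XY. Then A', B', C' are collinear (the Gergonne line: triangles ABC and XYZ are perspective from a line). -/

import Mathlib

/-!
The tangency points divide the sides in the ratio of the radii, `Z = (b A + a B) / (a + b)` and
cyclically, so `X`, `Y`, `Z` are the feet of the cevians through the Gergonne point, with
barycentric coordinates `(1/a : 1/b : 1/c)`. Intersecting the side lines with the opposite sides of `XYZ` gives
`A' = (c B - b C) / (c - b)`, `B' = (a C - c A) / (a - c)`, `C' = (b A - a B) / (b - a)`, and then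
`a (c - b) A' + b (a - c) B' + c (b - a) C' = 0` is an affine dependence, with coefficient sum
zero, among the three points.
-/

open AffineMap

section Affine

variable {k V P : Type*} [Field k] [AddCommGroup V] [Module k V] [AddTorsor V P]

theorem collinear_of_smul_vsub_add_smul_vsub_eq_zero {A B C : P} {s t : k}
    (h : s • (B -ᵥ A) + t • (C -ᵥ A) = 0) (hst : s ≠ 0 ∨ t ≠ 0) :
    Collinear k {A, B, C} := by
  rw [collinear_iff_not_affineIndependent_set, affineIndependent_iff_of_fintype]
  intro hind
  have hw := hind ![-(s + t), s, t] (by simp [Fin.sum_univ_three]) (by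
    rw [Finset.weightedVSub_eq_weightedVSubOfPoint_of_sum_eq_zero _ _ _
      (by simp [Fin.sum_univ_three]) A, Finset.weightedVSubOfPoint_apply]
    simpa [Fin.sum_univ_three] using h)
  exact hst.elim (· (hw 1)) (· (hw 2))

theorem eq_zero_of_smul_vsub_add_smul_vsub_eq_zero {A B C : P} (hABC : ¬ Collinear k {A, B, C})
    {s t : k} (h : s • (B -ᵥ A) + t • (C -ᵥ A) = 0) : s = 0 ∧ t = 0 := by
  by_contra hst
  exact hABC (collinear_of_smul_vsub_add_smul_vsub_eq_zero h (not_and_or.mp hst))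

theorem sub_smul_vsub_eq_smul_vsub_of_mem_line_of_mem_line {A B C X Y Z : P} {a b c : k}
    (hABC : ¬ Collinear k {A, B, C}) (hab : a + b ≠ 0) (hac : a + c ≠ 0)
    (hZ : Z = lineMap A B (a / (a + b))) (hY : Y = lineMap A C (a / (a + c)))
    (hXBC : X ∈ line[k, B, C]) (hXYZ : X ∈ line[k, Y, Z]) :
    (c - b) • (X -ᵥ B) = b • (B -ᵥ C) := by
  obtain ⟨s, rfl⟩ := mem_affineSpan_pair_iff_exists_lineMap_eq.mp hXBC
  obtain ⟨r, hr⟩ := mem_affineSpan_pair_iff_exists_lineMap_eq.mp hXYZ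
  subst hZ hY
  have hcoord : ((1 - s) - r * (a / (a + b))) • (B -ᵥ A)
      + (s - (1 - r) * (a / (a + c))) • (C -ᵥ A) = 0 := by
    have := congrArg (· -ᵥ A) hr
    simp only [lineMap_apply, vadd_vsub_assoc, vsub_vadd_eq_vsub_sub, vsub_self,
      ← vsub_sub_vsub_cancel_right C B A] at this
    linear_combination (norm := module) this.symm
  obtain ⟨h₁, h₂⟩ := eq_zero_of_smul_vsub_add_smul_vsub_eq_zero hABC hcoord
  have hs : s * (b - c) = b := by
    field_simp at h₁ h₂
    linear_combination -h₁ - h₂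
  rw [lineMap_vsub_left, smul_smul, ← neg_vsub_eq_vsub_rev C B, smul_neg, ← neg_smul]
  congr 1
  linear_combination -hs

end Affine

section Metric

variable {V P : Type*} [NormedAddCommGroup V] [NormedSpace ℝ V] [MetricSpace P]
  [NormedAddTorsor V P]

theorem not_collinear_of_dist_lt_dist_add_dist {A B C : P}
    (hA : dist C B < dist C A + dist A B) (hB : dist A C < dist A B + dist B C)
    (hC : dist B A < dist B C + dist C A) : ¬ Collinear ℝ {A, B, C} := by
  intro h
  rcases h.wbtw_or_wbtw_or_wbtw with h | h | h
  · exact hB.ne' h.dist_add_dist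
  · exact hC.ne' h.dist_add_dist
  · exact hA.ne' h.dist_add_dist

theorem eq_lineMap_of_dist_eq_add [StrictConvexSpace ℝ V] {A B Z : P} {a b : ℝ}
    (hab : a + b ≠ 0) (hAB : dist A B = a + b) (hAZ : dist A Z = a) (hBZ : dist B Z = b) :
    Z = lineMap A B (a / (a + b)) := by
  apply eq_lineMap_of_dist_eq_mul_of_dist_eq_mul
  · rw [hAZ, hAB, div_mul_cancel₀ _ hab]
  · rw [dist_comm, hBZ, hAB]
    field_simp
    ring

end Metric

/-- The Gergonne line: in a three-circle configuration, the points
`A' = BC ∩ YZ`, `B' = CA ∩ ZX`, `C' = AB ∩ XY` are collinear. -/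
theorem gergonne_line
    (A B C X Y Z A' B' C' : EuclideanSpace ℝ (Fin 2)) (a b c : ℝ)
    (ha : 0 < a) (hb : 0 < b) (hc : 0 < c)
    (hAB : dist A B = a + b) (hBC : dist B C = b + c) (hAC : dist A C = a + c)
    (hZA : dist A Z = a) (hZB : dist B Z = b)
    (hXB : dist B X = b) (hXC : dist C X = c)
    (hYA : dist A Y = a) (hYC : dist C Y = c)
    (hA'BC : A' ∈ line[ℝ, B, C]) (hA'YZ : A' ∈ line[ℝ, Y, Z])
    (hB'CA : B' ∈ line[ℝ, C, A]) (hB'ZX : B' ∈ line[ℝ, Z, X])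
    (hC'AB : C' ∈ line[ℝ, A, B]) (hC'XY : C' ∈ line[ℝ, X, Y]) :
    Collinear ℝ ({A', B', C'} : Set (EuclideanSpace ℝ (Fin 2))) := by
  have hBA : dist B A = b + a := by rw [dist_comm, hAB, add_comm]
  have hCB : dist C B = c + b := by rw [dist_comm, hBC, add_comm]
  have hCA : dist C A = c + a := by rw [dist_comm, hAC, add_comm]
  have hABC : ¬ Collinear ℝ {A, B, C} :=
    not_collinear_of_dist_lt_dist_add_dist (by linarith) (by linarith) (by linarith)
  have hBCA : ¬ Collinear ℝ {B, C, A} := by rwa [Set.pair_comm C A, Set.insert_comm B A]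
  have hCAB : ¬ Collinear ℝ {C, A, B} := by rwa [Set.insert_comm C A, Set.pair_comm C B]
  have hA' := sub_smul_vsub_eq_smul_vsub_of_mem_line_of_mem_line hABC (by positivity)
    (by positivity) (eq_lineMap_of_dist_eq_add (by positivity) hAB hZA hZB)
    (eq_lineMap_of_dist_eq_add (by positivity) hAC hYA hYC) hA'BC hA'YZ
  have hB' := sub_smul_vsub_eq_smul_vsub_of_mem_line_of_mem_line hBCA (by positivity)
    (by positivity) (eq_lineMap_of_dist_eq_add (by positivity) hBC hXB hXC)
    (eq_lineMap_of_dist_eq_add (by positivity) hBA hZB hZA) hB'CA hB'ZX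
  have hC' := sub_smul_vsub_eq_smul_vsub_of_mem_line_of_mem_line hCAB (by positivity)
    (by positivity) (eq_lineMap_of_dist_eq_add (by positivity) hCA hYC hYA)
    (eq_lineMap_of_dist_eq_add (by positivity) hCB hXC hXB) hC'AB hC'XY
  have hba : b - a ≠ 0 := by
    intro h
    rw [h, zero_smul, eq_comm, smul_eq_zero, vsub_eq_zero_iff_eq] at hC'
    rcases hC' with h | h
    · linarith
    · rw [h, dist_self] at hAB; linarith
  refine collinear_of_smul_vsub_add_smul_vsub_eq_zero (s := b * (a - c)) (t := c * (b - a)) ?_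
    (Or.inr (mul_ne_zero hc.ne' hba))
  simp only [vsub_eq_sub] at hA' hB' hC' ⊢
  linear_combination (norm := module) a • hA' + b • hB' + c • hC'
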